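/- The functions H_1 = Σ u_i and H_2 = Σ u_i²/2 + Σ u_i u_{i+1} are in involution with respect to the quadratic bracket π_2: {H_1, H_2}_{π_2} = ∇H_1^T π_2 ∇H_2 = 0. -/

import Mathlib

/-- Partial derivative of a function on `ℝ^ℕ` with respect to the `k`-th coordinate. -/
noncomputable def pd (f : (ℕ → ℝ) → ℝ) (k : ℕ) (u : ℕ → ℝ) : ℝ :=
  deriv (fun x => f (Function.update u k x)) (u k)

/-- The quadratic Poisson bivector `π₂`. -/
noncomputable def pi2Biv (u : ℕ → ℝ) (i j : ℕ) : ℝ :=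
  if j = i + 1 then u i * u j
  else if i = j + 1 then -(u i * u j)
  else 0

/-- `H₁ = ∑ uᵢ` and `H₂ = ∑ uᵢ²/2 + ∑ uᵢuᵢ₊₁` are in involution with respect to the
quadratic bracket: `{H₁, H₂}_{π₂} = ∇H₁ᵀ π₂ ∇H₂ = 0` (with `u₀ = u_{N+1} = 0`). -/
lemma pd_H1 (N i : ℕ) (u : ℕ → ℝ) (hi : i ∈ Finset.Icc 1 N) :
    pd (fun v => ∑ k ∈ Finset.Icc 1 N, v k) i u = 1 := by
  unfold pd
  have h : (fun x => ∑ k ∈ Finset.Icc 1 N, Function.update u i x k)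
      = fun x => x + ∑ k ∈ Finset.Icc 1 N \ {i}, u k := by
    funext x
    rw [Finset.sum_update_of_mem hi]
  rw [h]
  simp

lemma pd_H2 (N j : ℕ) (u : ℕ → ℝ) (hu0 : u 0 = 0) (huN : u (N + 1) = 0)
    (hj : j ∈ Finset.Icc 1 N) :
    pd (fun v => (∑ k ∈ Finset.Icc 1 N, (v k) ^ 2 / 2)
        + ∑ k ∈ Finset.Icc 1 (N - 1), v k * v (k + 1)) j u
      = u (j - 1) + u j + u (j + 1) := by
  rw [Finset.mem_Icc] at hj
  have h1 : HasDerivAt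
      (fun x => ∑ k ∈ Finset.Icc 1 N, (Function.update u j x k) ^ 2 / 2)
      (∑ k ∈ Finset.Icc 1 N, (if k = j then u j else 0)) (u j) := by
    apply HasDerivAt.fun_sum
    intro k hk
    rcases eq_or_ne k j with h | h
    · subst h
      rw [if_pos rfl]
      have hfun : (fun x => (Function.update u k x k) ^ 2 / 2) = fun x => x ^ 2 / 2 := by
        funext x; rw [Function.update_self]
      rw [hfun]
      have := ((hasDerivAt_id (u k)).pow 2).div_const 2
      refine this.congr_deriv ?_
      simp
    · rw [if_neg h]
      have hfun : (fun x => (Function.update u j x k) ^ 2 / 2) = fun _ => (u k) ^ 2 / 2 := by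
        funext x; rw [Function.update_of_ne h]
      rw [hfun]
      exact hasDerivAt_const _ _
  have h2 : HasDerivAt
      (fun x => ∑ k ∈ Finset.Icc 1 (N - 1),
        Function.update u j x k * Function.update u j x (k + 1))
      (∑ k ∈ Finset.Icc 1 (N - 1),
        (if k = j then u (k + 1) else if k + 1 = j then u k else 0)) (u j) := by
    apply HasDerivAt.fun_sum
    intro k hk
    rcases eq_or_ne k j with h | h
    · subst h
      have hne : k + 1 ≠ k := by omega
      rw [if_pos rfl]
      have hfun : (fun x => Function.update u k x k * Function.update u k x (k + 1))
          = fun x => x * u (k + 1) := by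
        funext x; rw [Function.update_self, Function.update_of_ne hne]
      rw [hfun]
      have := (hasDerivAt_id (u k)).mul_const (u (k + 1))
      refine this.congr_deriv ?_
      simp
    · rcases eq_or_ne (k + 1) j with h' | h'
      · rw [if_neg h, if_pos h']
        have hfun : (fun x => Function.update u j x k * Function.update u j x (k + 1))
            = fun x => u k * x := by
          funext x; rw [Function.update_of_ne h, h', Function.update_self]
        rw [hfun]
        have := (hasDerivAt_id (u j)).const_mul (u k)
        refine this.congr_deriv ?_
        simp
      · rw [if_neg h, if_neg h']
        have hfun : (fun x => Function.update u j x k * Function.update u j x (k + 1))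
            = fun _ => u k * u (k + 1) := by
          funext x; rw [Function.update_of_ne h, Function.update_of_ne h']
        rw [hfun]
        exact hasDerivAt_const _ _
  have hD := (h1.fun_add h2).deriv
  unfold pd
  rw [hD]
  have e1 : (∑ k ∈ Finset.Icc 1 N, (if k = j then u j else 0)) = u j := by
    rw [Finset.sum_ite_eq']
    simp [Finset.mem_Icc, hj.1, hj.2]
  have e2 : (∑ k ∈ Finset.Icc 1 (N - 1),
      (if k = j then u (k + 1) else if k + 1 = j then u k else 0))
      = (if j ∈ Finset.Icc 1 (N - 1) then u (j + 1) else 0)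
        + (if j - 1 ∈ Finset.Icc 1 (N - 1) then u (j - 1) else 0) := by
    have hsplit : ∀ k, (if k = j then u (k + 1) else if k + 1 = j then u k else 0)
        = (if k = j then u (k + 1) else 0) + (if k = j - 1 then u k else 0) := by
      intro k
      have hj1 : 1 ≤ j := hj.1
      have hne : j - 1 ≠ j := by omega
      rcases eq_or_ne k j with rfl | a
      · rw [if_pos rfl, if_pos rfl, if_neg (show ¬ k = k - 1 by omega)]
        ring
      · rw [if_neg a, if_neg a]
        rcases eq_or_ne (k + 1) j with b | b
        · rw [if_pos b, if_pos (show k = j - 1 by omega)]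
          ring
        · rw [if_neg b, if_neg (show ¬ k = j - 1 by omega)]
          ring
    simp only [hsplit]
    rw [Finset.sum_add_distrib, Finset.sum_ite_eq', Finset.sum_ite_eq']
  rw [e1, e2]
  simp only [Finset.mem_Icc]
  split_ifs with h1' h2' h3'
  · ring
  · have : j = 1 := by omega
    subst this
    simp [hu0]
  · have : j = N := by omega
    subst this
    rw [huN]; ring
  · have hN : j = N := by omega
    have hone : j = 1 := by omega
    subst hN
    subst hone
    simp [hu0, huN]

lemma pi2_inner_sum (N : ℕ) (u : ℕ → ℝ) (E : ℕ → ℝ) (m : ℕ)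
    (hm : m + 1 ∈ Finset.Icc 1 N) (hu0 : u 0 = 0) (huN : u (N + 1) = 0) :
    ∑ j ∈ Finset.Icc 1 N, pi2Biv u (m + 1) j * E j
      = u (m + 1) * u (m + 2) * E (m + 2) - u m * u (m + 1) * E m := by
  rw [Finset.mem_Icc] at hm
  have hsplit : ∀ j, pi2Biv u (m + 1) j * E j
      = (if j = m + 2 then u (m + 1) * u j * E j else 0)
        + (if j = m then -(u (m + 1) * u j * E j) else 0) := by
    intro j
    unfold pi2Biv
    rcases eq_or_ne j (m + 2) with a | a
    · rw [if_pos (show j = (m + 1) + 1 by omega), if_pos a, if_neg (show ¬ j = m by omega)]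
      ring
    · rw [if_neg (show ¬ j = (m + 1) + 1 by omega), if_neg a]
      rcases eq_or_ne j m with b | b
      · rw [if_pos (show m + 1 = j + 1 by omega), if_pos b]
        ring
      · rw [if_neg (show ¬ m + 1 = j + 1 by omega), if_neg b]
        ring
  simp only [hsplit]
  rw [Finset.sum_add_distrib, Finset.sum_ite_eq', Finset.sum_ite_eq']
  have e1 : (if m + 2 ∈ Finset.Icc 1 N then u (m + 1) * u (m + 2) * E (m + 2) else 0)
      = u (m + 1) * u (m + 2) * E (m + 2) := by
    simp only [Finset.mem_Icc]
    split_ifs with h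
    · rfl
    · have : m + 2 = N + 1 := by omega
      rw [this, huN]; ring
  have e2 : (if m ∈ Finset.Icc 1 N then -(u (m + 1) * u m * E m) else 0)
      = -(u m * u (m + 1) * E m) := by
    simp only [Finset.mem_Icc]
    split_ifs with h
    · ring
    · have : m = 0 := by omega
      rw [this, hu0]; ring
  rw [e1, e2]
  ring

lemma telescope (u : ℕ → ℝ) (hu0 : u 0 = 0) (n : ℕ) :
    ∑ m ∈ Finset.range n,
        (u (m + 1) * u (m + 2) * (u (m + 1) + u (m + 2) + u (m + 3))
          - u m * u (m + 1) * (u (m - 1) + u m + u (m + 1)))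
      = u n * u (n + 1) * (u n + u (n + 1)) + u n * u (n + 1) * u (n + 2)
        + u (n - 1) * u n * u (n + 1) := by
  induction n with
  | zero => simp [hu0]
  | succ n ih =>
    rw [Finset.sum_range_succ, ih]
    cases n with
    | zero => simp [hu0]; ring
    | succ n' =>
      simp only [Nat.add_sub_cancel]
      ring

def tTerm (u : ℕ → ℝ) (m : ℕ) : ℝ :=
  u (m + 1) * u (m + 2) * (u (m + 1) + u (m + 2) + u (m + 3))
    - u m * u (m + 1) * (u (m - 1) + u m + u (m + 1))

lemma telescope' (u : ℕ → ℝ) (hu0 : u 0 = 0) (n : ℕ) :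
    ∑ m ∈ Finset.range n, tTerm u m
      = u n * u (n + 1) * (u n + u (n + 1)) + u n * u (n + 1) * u (n + 2)
        + u (n - 1) * u n * u (n + 1) := by
  simp only [tTerm]
  exact telescope u hu0 n

theorem H1_H2_involution (N : ℕ) (u : ℕ → ℝ) (hu0 : u 0 = 0) (huN : u (N + 1) = 0) :
    ∑ i ∈ Finset.Icc 1 N, ∑ j ∈ Finset.Icc 1 N,
        pd (fun v => ∑ k ∈ Finset.Icc 1 N, v k) i u * pi2Biv u i j *
          pd (fun v => (∑ k ∈ Finset.Icc 1 N, (v k) ^ 2 / 2)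
            + ∑ k ∈ Finset.Icc 1 (N - 1), v k * v (k + 1)) j u
      = 0 := by
  have hrow : ∀ i ∈ Finset.Icc 1 N,
      (∑ j ∈ Finset.Icc 1 N,
        pd (fun v => ∑ k ∈ Finset.Icc 1 N, v k) i u * pi2Biv u i j *
          pd (fun v => (∑ k ∈ Finset.Icc 1 N, (v k) ^ 2 / 2)
            + ∑ k ∈ Finset.Icc 1 (N - 1), v k * v (k + 1)) j u)
      = tTerm u (i - 1) := by
    intro i hi
    obtain ⟨m, rfl⟩ : ∃ m, i = m + 1 := by
      have h1 : 1 ≤ i := (Finset.mem_Icc.mp hi).1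
      exact ⟨i - 1, by omega⟩
    have hc : ∀ j ∈ Finset.Icc 1 N,
        pd (fun v => ∑ k ∈ Finset.Icc 1 N, v k) (m + 1) u * pi2Biv u (m + 1) j *
          pd (fun v => (∑ k ∈ Finset.Icc 1 N, (v k) ^ 2 / 2)
            + ∑ k ∈ Finset.Icc 1 (N - 1), v k * v (k + 1)) j u
        = pi2Biv u (m + 1) j * (u (j - 1) + u j + u (j + 1)) := by
      intro j hj
      rw [pd_H1 N (m + 1) u hi, pd_H2 N j u hu0 huN hj]
      ring
    rw [Finset.sum_congr rfl hc,
      pi2_inner_sum N u (fun j => u (j - 1) + u j + u (j + 1)) m hi hu0 huN]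
    rw [show m + 2 - 1 = m + 1 by omega, show m + 1 - 1 = m by omega]
    simp only [tTerm]
  rw [Finset.sum_congr rfl hrow, ← Finset.Ico_add_one_right_eq_Icc, Finset.sum_Ico_eq_sum_range]
  rw [show N + 1 - 1 = N by omega]
  rw [Finset.sum_congr rfl (fun i _ => by rw [show 1 + i - 1 = i by omega] :
    ∀ i ∈ Finset.range N, tTerm u (1 + i - 1) = tTerm u i)]
  rw [telescope' u hu0 N, huN]
  ring
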